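/- arXiv:2102.08109 — 7 statements merged into one kernel-verified Lean document; each statement's English description precedes it below -/
import Mathlib

section
/- Let C be a category with a stable proper factorisation system and f : X → Y a morphism. If Y is a path and f is an embedding, then X is a path; if X is a path and f is a quotient, then Y is a path. -/
open CategoryTheory CategoryTheory.Limits

universe v u

variable {C : Type u} [Category.{v} C]

/-- A weak factorisation system `(Q, M)` on a category `C`. -/
structure WFS (C : Type u) [Category.{v} C] where
  Q : MorphismProperty C
  M : MorphismProperty C
  fact : ∀ {X Y : C} (f : X ⟶ Y), ∃ (Z : C) (e : X ⟶ Z) (m : Z ⟶ Y), Q e ∧ M m ∧ e ≫ m = f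
  Q_iff : ∀ {X Y : C} (f : X ⟶ Y), Q f ↔ ∀ ⦃A B : C⦄ (g : A ⟶ B), M g → HasLiftingProperty f g
  M_iff : ∀ {X Y : C} (g : X ⟶ Y), M g ↔ ∀ ⦃A B : C⦄ (f : A ⟶ B), Q f → HasLiftingProperty f g

/-- A proper factorisation system: a weak factorisation system in which every `Q`-morphism is an
epimorphism and every `M`-morphism is a monomorphism. -/
structure ProperWFS (C : Type u) [Category.{v} C] extends WFS C where
  q_epi : ∀ {X Y : C} (f : X ⟶ Y), Q f → Epi f
  m_mono : ∀ {X Y : C} (f : X ⟶ Y), M f → Mono f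


/-- A stable proper factorisation system: additionally, the pullback of a quotient (`Q`-morphism)
along an embedding (`M`-morphism) exists and is again a quotient. -/
structure StableWFS (C : Type u) [Category.{v} C] extends ProperWFS C where
  stable : ∀ {X Z W : C} (e : X ⟶ W) (m : Z ⟶ W), Q e → M m →
    ∃ (P : C) (p₁ : P ⟶ X) (p₂ : P ⟶ Z), IsPullback p₁ p₂ e m ∧ Q p₂

/-- The type of `M`-subobjects (representatives): embeddings into `X`. -/
abbrev MSub (M : MorphismProperty C) (X : C) : Type (max u v) :=
  Σ S : C, {m : S ⟶ X // M m}

/-- `M`-subobjects are preordered by factorisation; the poset of `M`-subobjects is the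
induced partial order on the antisymmetrization. -/
instance (M : MorphismProperty C) (X : C) : Preorder (MSub M X) where
  le a b := ∃ i : a.1 ⟶ b.1, i ≫ b.2.1 = a.2.1
  le_refl a := ⟨𝟙 a.1, Category.id_comp _⟩
  le_trans a b c h₁ h₂ := by
    obtain ⟨i, hi⟩ := h₁
    obtain ⟨j, hj⟩ := h₂
    exact ⟨i ≫ j, by rw [Category.assoc, hj, hi]⟩

/-- An object `X` is a path if its poset of `M`-subobjects is a finite chain, i.e. the preorder
of `M`-subobjects is total and has finitely many equivalence classes. -/
def IsPathOb (M : MorphismProperty C) (X : C) : Prop :=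
  (∀ a b : MSub M X, a ≤ b ∨ b ≤ a) ∧ Finite (Antisymmetrization (MSub M X) (· ≤ ·))


lemma wfs_M_comp (w : WFS C) {X Y Z : C} {m₁ : X ⟶ Y} {m₂ : Y ⟶ Z}
    (h₁ : w.M m₁) (h₂ : w.M m₂) : w.M (m₁ ≫ m₂) := by
  rw [w.M_iff]
  intro A B f hf
  haveI := (w.M_iff m₁).1 h₁ f hf
  haveI := (w.M_iff m₂).1 h₂ f hf
  infer_instance

lemma wfs_M_pullback (w : WFS C) {P X Z W : C} {p₁ : P ⟶ X} {p₂ : P ⟶ Z}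
    {e : X ⟶ W} {m : Z ⟶ W} (hpb : IsPullback p₁ p₂ e m) (hm : w.M m) : w.M p₁ := by
  rw [w.M_iff]
  intro A B f hf
  constructor
  intro a b sq
  haveI := (w.M_iff m).1 hm f hf
  have sq2 : CommSq (a ≫ p₂) f m (b ≫ e) := ⟨by
    rw [Category.assoc, ← hpb.w, ← Category.assoc, sq.w, Category.assoc]⟩
  have hfl := sq2.fac_left
  have hfr := sq2.fac_right
  refine CommSq.HasLift.mk' ⟨hpb.lift b sq2.lift hfr.symm, ?_, hpb.lift_fst _ _ _⟩
  apply hpb.hom_ext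
  · rw [Category.assoc, hpb.lift_fst, sq.w]
  · rw [Category.assoc, hpb.lift_snd, hfl]

lemma isPathOb_of_reflect {M : MorphismProperty C} {A B : C}
    (g : MSub M A → MSub M B) (hg : ∀ a b, a ≤ b ↔ g a ≤ g b) :
    IsPathOb M B → IsPathOb M A := by
  rintro ⟨tot, fin⟩
  constructor
  · intro a b
    rcases tot (g a) (g b) with h | h
    · exact Or.inl ((hg a b).2 h)
    · exact Or.inr ((hg b a).2 h)
  · have compat : ∀ a b, AntisymmRel (· ≤ ·) a b → AntisymmRel (· ≤ ·) (g a) (g b) :=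
      fun a b h => ⟨(hg a b).1 h.1, (hg b a).1 h.2⟩
    refine @Finite.of_injective _ _ fin (Quotient.map g compat) ?_
    intro x y h
    induction x using Quotient.ind
    induction y using Quotient.ind
    rename_i a b
    have h2 : AntisymmRel (· ≤ ·) (g a) (g b) := Quotient.exact h
    exact Quotient.sound ⟨(hg a b).2 h2.1, (hg b a).2 h2.2⟩

/-- Let `f : X ⟶ Y`. If `Y` is a path and `f` is an embedding, then `X` is a path;
if `X` is a path and `f` is a quotient, then `Y` is a path. -/
theorem stmt8 (w : StableWFS C) {X Y : C} (f : X ⟶ Y) :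
    (w.M f → IsPathOb w.M Y → IsPathOb w.M X) ∧
    (w.Q f → IsPathOb w.M X → IsPathOb w.M Y) := by

  constructor
  · intro hf hY
    refine isPathOb_of_reflect (M := w.M)
      (fun a => ⟨a.1, a.2.1 ≫ f, wfs_M_comp w.toWFS a.2.2 hf⟩) ?_ hY
    intro a b
    constructor
    · rintro ⟨i, hi⟩
      exact ⟨i, by rw [← Category.assoc, hi]⟩
    · rintro ⟨i, hi⟩
      haveI := w.m_mono f hf
      refine ⟨i, ?_⟩
      rw [← cancel_mono f, Category.assoc]
      exact hi
  · intro hf hX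
    choose P p₁ p₂ hpb hQ using fun a : MSub w.M Y => w.stable f a.2.1 hf a.2.2
    refine isPathOb_of_reflect (M := w.M)
      (fun a => ⟨P a, p₁ a, wfs_M_pullback w.toWFS (hpb a) a.2.2⟩) ?_ hX
    intro a b
    constructor
    · rintro ⟨i, hi⟩
      refine ⟨(hpb b).lift (p₁ a) (p₂ a ≫ i) ?_, (hpb b).lift_fst _ _ _⟩
      rw [(hpb a).w, Category.assoc, hi]
    · rintro ⟨j, hj⟩
      haveI := (w.M_iff b.2.1).1 b.2.2 (p₂ a) (hQ a)
      have sq : CommSq (j ≫ p₂ b) (p₂ a) b.2.1 a.2.1 := ⟨by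
        rw [Category.assoc, ← (hpb b).w, ← Category.assoc, hj, (hpb a).w]⟩
      exact ⟨sq.lift, sq.fac_right⟩
end

section
/- In the category of forests with forest morphisms, the pullback of a surjective forest morphism along an injective forest morphism exists, is computed as in Set, and the projection to the codomain of the injection is surjective; hence (surjections, injections) is a stable proper factorisation system on forests. -/
open CategoryTheory CategoryTheory.Limits

universe v u w

/-- A forest is a poset in which the down-set of every element is a finite chain. -/
def IsForest (α : Type*) [PartialOrder α] : Prop :=
  ∀ a : α, (Set.Iic a).Finite ∧ ∀ b c : α, b ≤ a → c ≤ a → b ≤ c ∨ c ≤ b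

/-- A forest morphism: a monotone map restricting to a bijection `↓u → ↓φ(u)` for every `u`. -/
def IsForestHom {α β : Type*} [PartialOrder α] [PartialOrder β] (f : α → β) : Prop :=
  Monotone f ∧ ∀ a : α, Set.BijOn f (Set.Iic a) (Set.Iic (f a))

/-- The category of forests and forest morphisms. -/
structure ForestCat : Type (w + 1) where
  carrier : Type w
  [po : PartialOrder carrier]
  forest : IsForest carrier

attribute [instance] ForestCat.po

instance : Category ForestCat.{w} where
  Hom F G := {f : F.carrier → G.carrier // IsForestHom f}
  id F := ⟨id, monotone_id, fun a => Set.bijOn_id _⟩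
  comp f g := ⟨g.1 ∘ f.1, g.2.1.comp f.2.1, fun a => (g.2.2 (f.1 a)).comp (f.2.2 a)⟩

section ForestAux

open Set Function

variable {α β γ : Type*} [PartialOrder α] [PartialOrder β] [PartialOrder γ]

/-- Injective forest morphisms reflect order. -/
lemma ForestAux.le_of_map_le {g : β → γ} (hg : IsForestHom g) (hgi : Function.Injective g)
    {b b' : β} (h : g b ≤ g b') : b ≤ b' := by
  obtain ⟨c, hc, hcg⟩ := (hg.2 b').2.2 (show g b ∈ Set.Iic (g b') from h)
  rwa [← hgi hcg]

namespace ForestAux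

variable {f : α → γ} {g : β → γ}

lemma pb_le (hf : IsForestHom f) (hg : IsForestHom g) (hgi : Function.Injective g)
    {p q : {p : α × β // f p.1 = g p.2}} (h : p.1.1 ≤ q.1.1) : p ≤ q := by
  have h2 : g p.1.2 ≤ g q.1.2 := by rw [← p.2, ← q.2]; exact hf.1 h
  exact ⟨h, le_of_map_le hg hgi h2⟩

lemma pb_ext (hgi : Function.Injective g)
    {p q : {p : α × β // f p.1 = g p.2}} (h : p.1.1 = q.1.1) : p = q := by
  refine Subtype.ext (Prod.ext h (hgi ?_))
  rw [← p.2, ← q.2, h]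

lemma isForest_pullback (hα : IsForest α) (hf : IsForestHom f) (hg : IsForestHom g)
    (hgi : Function.Injective g) : IsForest {p : α × β // f p.1 = g p.2} := by
  intro a
  constructor
  · apply Set.Finite.of_finite_image (f := fun p => p.1.1)
    · exact (hα a.1.1).1.subset (by rintro _ ⟨q, hq, rfl⟩; exact hq.1)
    · intro p _ q _ h
      exact pb_ext hgi h
  · intro b c hb hc
    rcases (hα a.1.1).2 b.1.1 c.1.1 hb.1 hc.1 with h | h
    · exact Or.inl (pb_le hf hg hgi h)
    · exact Or.inr (pb_le hf hg hgi h)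

lemma isForestHom_fst (hf : IsForestHom f) (hg : IsForestHom g)
    (hgi : Function.Injective g) :
    IsForestHom (fun p : {p : α × β // f p.1 = g p.2} => p.1.1) := by
  refine ⟨fun p q h => h.1, fun a => ⟨fun p hp => hp.1, ?_, ?_⟩⟩
  · intro p _ q _ h
    exact pb_ext hgi h
  · intro a' (ha' : a' ≤ a.1.1)
    have : f a' ∈ Set.Iic (g a.1.2) := by rw [← a.2]; exact hf.1 ha'
    obtain ⟨b', hb', hgb'⟩ := (hg.2 a.1.2).2.2 this
    exact ⟨⟨(a', b'), hgb'.symm⟩, ⟨ha', hb'⟩, rfl⟩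

lemma isForestHom_snd (hf : IsForestHom f) (hg : IsForestHom g)
    (hgi : Function.Injective g) :
    IsForestHom (fun p : {p : α × β // f p.1 = g p.2} => p.1.2) := by
  refine ⟨fun p q h => h.2, fun a => ⟨fun p hp => hp.2, ?_, ?_⟩⟩
  · intro p hp q hq h
    refine pb_ext hgi ((hf.2 a.1.1).2.1 hp.1 hq.1 ?_)
    rw [p.2, q.2]; exact congrArg g h
  · intro b (hb : b ≤ a.1.2)
    have : g b ∈ Set.Iic (f a.1.1) := by rw [a.2]; exact hg.1 hb
    obtain ⟨a', ha', hfa'⟩ := (hf.2 a.1.1).2.2 this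
    exact ⟨⟨(a', b), hfa'⟩, ⟨ha', hb⟩, rfl⟩

lemma surjective_snd (hfs : Function.Surjective f) :
    Function.Surjective (fun p : {p : α × β // f p.1 = g p.2} => p.1.2) := by
  intro b
  obtain ⟨a, ha⟩ := hfs (g b)
  exact ⟨⟨(a, b), ha⟩, rfl⟩

lemma isForestHom_pair {δ : Type*} [PartialOrder δ] {p : δ → α} {q : δ → β}
    (hgi : Function.Injective g)
    (hp : IsForestHom p) (hq : IsForestHom q) (hpq : ∀ d, f (p d) = g (q d)) :
    IsForestHom (fun d => (⟨(p d, q d), hpq d⟩ : {p : α × β // f p.1 = g p.2})) := by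
  refine ⟨fun d d' h => ⟨hp.1 h, hq.1 h⟩, fun d => ⟨fun d' hd' => ⟨hp.1 hd', hq.1 hd'⟩, ?_, ?_⟩⟩
  · intro d₁ h₁ d₂ h₂ h
    exact (hp.2 d).2.1 h₁ h₂ (congrArg (fun z => z.1.1) h)
  · rintro ⟨⟨a, b⟩, hab⟩ ⟨(ha : a ≤ p d), (hb : b ≤ q d)⟩
    obtain ⟨d', hd', hpd'⟩ := (hp.2 d).2.2 (show a ∈ Set.Iic (p d) from ha)
    refine ⟨d', hd', ?_⟩
    have hqb : q d' = b := by
      apply hgi; rw [← hpq d', hpd', hab]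
    simp only [hpd', hqb]

/-- The lifting lemma: surjections lift against injections. -/
lemma exists_lift {X Y A B : Type*} [PartialOrder X] [PartialOrder Y] [PartialOrder A]
    [PartialOrder B] {e : X → Y} {m : A → B} {u : X → A} {v : Y → B}
    (he : IsForestHom e) (hu : IsForestHom u)
    (hes : Function.Surjective e) (hmi : Function.Injective m)
    (hcomm : ∀ x, m (u x) = v (e x)) :
    ∃ l : Y → A, IsForestHom l ∧ (∀ x, l (e x) = u x) ∧ (∀ y, m (l y) = v y) := by
  choose s hs using hes
  have key : ∀ x, u (s (e x)) = u x := by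
    intro x
    apply hmi
    rw [hcomm, hcomm, hs]
  refine ⟨fun y => u (s y), ?_, key, fun y => by rw [hcomm, hs]⟩
  constructor
  · intro y y' hyy'
    have : y ∈ Set.Iic (e (s y')) := by rw [hs]; exact hyy'
    obtain ⟨x, hx, hex⟩ := (he.2 (s y')).2.2 this
    calc u (s y) = u x := by rw [← key x, hex]
    _ ≤ u (s y') := hu.1 hx
  · intro y
    set x := s y with hxdef
    have hex : e x = y := hs y
    constructor
    · intro y' (hy' : y' ≤ y)
      obtain ⟨x', hx', hex'⟩ := (he.2 x).2.2 (show y' ∈ Set.Iic (e x) by rw [hex]; exact hy')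
      show u (s y') ≤ u (s y)
      rw [← hex', key]
      exact hu.1 hx'
    constructor
    · intro y₁ h₁ y₂ h₂ h
      obtain ⟨x₁, hx₁, hex₁⟩ := (he.2 x).2.2 (show y₁ ∈ Set.Iic (e x) by rw [hex]; exact h₁)
      obtain ⟨x₂, hx₂, hex₂⟩ := (he.2 x).2.2 (show y₂ ∈ Set.Iic (e x) by rw [hex]; exact h₂)
      have : u x₁ = u x₂ := by
        rw [← key x₁, ← key x₂, hex₁, hex₂]; exact h
      rw [← hex₁, ← hex₂, (hu.2 x).2.1 hx₁ hx₂ this]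
    · intro a (ha : a ≤ u (s y))
      obtain ⟨x', hx', hux'⟩ := (hu.2 x).2.2 (show a ∈ Set.Iic (u x) from ha)
      exact ⟨e x', (he.2 x).1 hx' |>.trans_eq hex, by rw [Set.mem_Iic] at *; show u (s (e x')) = a; rw [key, hux']⟩

/-- Downward-closed subsets of forests are forests. -/
lemma isForest_subtype (hγ : IsForest γ) (S : Set γ)
    (hS : ∀ ⦃a b : γ⦄, a ∈ S → b ≤ a → b ∈ S) : IsForest S := by
  rintro ⟨c, hc⟩
  constructor
  · apply Set.Finite.of_finite_image (f := Subtype.val)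
    · exact (hγ c).1.subset (by rintro _ ⟨q, hq, rfl⟩; exact hq)
    · exact fun p _ q _ h => Subtype.ext h
  · intro b d hb hd
    rcases (hγ c).2 b.1 d.1 hb hd with h | h
    · exact Or.inl h
    · exact Or.inr h

lemma isForestHom_val (S : Set γ) (hS : ∀ ⦃a b : γ⦄, a ∈ S → b ≤ a → b ∈ S) :
    IsForestHom (Subtype.val : S → γ) := by
  refine ⟨fun p q h => h, fun a => ⟨fun p hp => hp, fun p _ q _ h => Subtype.ext h, ?_⟩⟩
  intro c (hc : c ≤ a.1)
  exact ⟨⟨c, hS a.2 hc⟩, hc, rfl⟩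

lemma range_lower {f : α → γ} (hf : IsForestHom f) :
    ∀ ⦃a b : γ⦄, a ∈ Set.range f → b ≤ a → b ∈ Set.range f := by
  rintro _ b ⟨x, rfl⟩ hb
  obtain ⟨x', _, hx'⟩ := (hf.2 x).2.2 (show b ∈ Set.Iic (f x) from hb)
  exact ⟨x', hx'⟩

lemma isForestHom_rangeFactorization {f : α → γ} (hf : IsForestHom f) :
    IsForestHom (fun x => (⟨f x, Set.mem_range_self x⟩ : Set.range f)) := by
  refine ⟨fun x y h => show f x ≤ f y from hf.1 h, fun a => ⟨?_, ?_, ?_⟩⟩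
  · intro x hx
    exact show f x ≤ f a from hf.1 hx
  · intro x hx y hy h
    exact (hf.2 a).2.1 hx hy (congrArg Subtype.val h)
  · rintro ⟨c, hc⟩ (h : c ≤ f a)
    obtain ⟨x, hx, hfx⟩ := (hf.2 a).2.2 (show c ∈ Set.Iic (f a) from h)
    exact ⟨x, hx, Subtype.ext hfx⟩

end ForestAux
end ForestAux

section ForestCatAux
open ForestAux Function

lemma ForestCat.hom_val {F G H : ForestCat} (u : F ⟶ G) (v : G ⟶ H) (x : F.carrier) :
    (u ≫ v).1 x = v.1 (u.1 x) := rfl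

lemma ForestCatAux.llp {X Y A B : ForestCat} (e : X ⟶ Y) (m : A ⟶ B)
    (hes : Function.Surjective e.1) (hmi : Function.Injective m.1) :
    HasLiftingProperty e m := by
  constructor
  intro u v sq
  obtain ⟨l, hl, hle, hlm⟩ := ForestAux.exists_lift e.2 u.2 hes hmi
    (fun x => congrFun (congrArg Subtype.val sq.w) x)
  exact ⟨⟨⟨⟨l, hl⟩, Subtype.ext (funext hle), Subtype.ext (funext hlm)⟩⟩⟩

/-- The image object of a forest morphism. -/
def ForestCatAux.imageObj {F G : ForestCat} (h : F ⟶ G) : ForestCat :=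
  ForestCat.mk (Set.range h.1) (ForestAux.isForest_subtype G.forest _ (ForestAux.range_lower h.2))

def ForestCatAux.imageE {F G : ForestCat} (h : F ⟶ G) : F ⟶ ForestCatAux.imageObj h :=
  ⟨fun x => ⟨h.1 x, Set.mem_range_self x⟩, ForestAux.isForestHom_rangeFactorization h.2⟩

def ForestCatAux.imageM {F G : ForestCat} (h : F ⟶ G) : ForestCatAux.imageObj h ⟶ G :=
  ⟨Subtype.val, ForestAux.isForestHom_val _ (ForestAux.range_lower h.2)⟩

lemma ForestCatAux.imageE_surj {F G : ForestCat} (h : F ⟶ G) :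
    Function.Surjective (ForestCatAux.imageE h).1 := by
  rintro ⟨y, x, hx⟩
  exact ⟨x, Subtype.ext hx⟩

lemma ForestCatAux.image_fac {F G : ForestCat} (h : F ⟶ G) :
    ForestCatAux.imageE h ≫ ForestCatAux.imageM h = h :=
  Subtype.ext rfl

/-- The weak factorisation system (surjections, injections) on forests. -/
noncomputable def ForestCatAux.wfs : WFS ForestCat.{w} where
  Q := fun _ _ h => Function.Surjective h.1
  M := fun _ _ h => Function.Injective h.1
  fact f := ⟨imageObj f, imageE f, imageM f, imageE_surj f, Subtype.val_injective, image_fac f⟩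
  Q_iff f := by
    constructor
    · intro hs A B g hg
      exact ForestCatAux.llp f g hs hg
    · intro hlift
      haveI := hlift (imageM f) Subtype.val_injective
      have sq : CommSq (imageE f) f (imageM f) (𝟙 _) := ⟨by rw [image_fac, Category.comp_id]⟩
      intro y
      have := congrFun (congrArg Subtype.val sq.fac_right) y
      refine ⟨((sq.lift.1 y).2).choose, ?_⟩
      have h2 := ((sq.lift.1 y).2).choose_spec
      rw [h2]
      exact this
  M_iff g := by
    constructor
    · intro hi A B f hf
      exact ForestCatAux.llp f g hf hi
    · intro hlift
      haveI := hlift (imageE g) (imageE_surj g)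
      have sq : CommSq (𝟙 _) (imageE g) g (imageM g) := ⟨by rw [image_fac, Category.id_comp]⟩
      have heinj : Function.Injective (imageE g).1 := by
        intro x₁ x₂ h
        have h1 : sq.lift.1 ((imageE g).1 x₁) = x₁ :=
          congrFun (congrArg Subtype.val sq.fac_left) x₁
        have h2 : sq.lift.1 ((imageE g).1 x₂) = x₂ :=
          congrFun (congrArg Subtype.val sq.fac_left) x₂
        rw [← h1, ← h2, h]
      intro x₁ x₂ h
      exact heinj (Subtype.ext h)

/-- In the category of forests, the pullback of a surjective forest morphism `f` along an
injective forest morphism `g` exists and is computed as in `Set`; the projection onto the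
codomain of the injection is surjective; hence (surjections, injections) form a stable proper
weak factorisation system on the category of forests. -/
theorem stmt9 {α β γ : Type w} [PartialOrder α] [PartialOrder β] [PartialOrder γ]
    (hα : IsForest α) (hβ : IsForest β) (hγ : IsForest γ)
    (f : α → γ) (g : β → γ) (hf : IsForestHom f) (hg : IsForestHom g)
    (hfs : Function.Surjective f) (hgi : Function.Injective g) :
    IsForest {p : α × β // f p.1 = g p.2} ∧
    IsForestHom (fun p : {p : α × β // f p.1 = g p.2} => p.1.1) ∧
    IsForestHom (fun p : {p : α × β // f p.1 = g p.2} => p.1.2) ∧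
    Function.Surjective (fun p : {p : α × β // f p.1 = g p.2} => p.1.2) ∧
    (∀ (δ : Type w) [PartialOrder δ], IsForest δ → ∀ (p : δ → α) (q : δ → β),
      IsForestHom p → IsForestHom q → (∀ d, f (p d) = g (q d)) →
      ∃! h : δ → {p : α × β // f p.1 = g p.2},
        IsForestHom h ∧ (∀ d, (h d).1.1 = p d) ∧ (∀ d, (h d).1.2 = q d)) ∧
    (∃ wfs : WFS ForestCat.{w},
      (∀ {F G : ForestCat.{w}} (h : F ⟶ G), wfs.Q h ↔ Function.Surjective h.1) ∧
      (∀ {F G : ForestCat.{w}} (h : F ⟶ G), wfs.M h ↔ Function.Injective h.1) ∧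
      (∀ {F G : ForestCat.{w}} (h : F ⟶ G), wfs.Q h → Epi h) ∧
      (∀ {F G : ForestCat.{w}} (h : F ⟶ G), wfs.M h → Mono h) ∧
      (∀ {X Z W : ForestCat.{w}} (e : X ⟶ W) (m : Z ⟶ W), wfs.Q e → wfs.M m →
        ∃ (P : ForestCat.{w}) (p₁ : P ⟶ X) (p₂ : P ⟶ Z), IsPullback p₁ p₂ e m ∧ wfs.Q p₂)) := by
  refine ⟨ForestAux.isForest_pullback hα hf hg hgi,
    ForestAux.isForestHom_fst hf hg hgi,
    ForestAux.isForestHom_snd hf hg hgi,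
    ForestAux.surjective_snd hfs, ?_, ?_⟩
  · intro δ _ _ p q hp hq hpq
    refine ⟨fun d => ⟨(p d, q d), hpq d⟩,
      ⟨ForestAux.isForestHom_pair hgi hp hq hpq, fun d => rfl, fun d => rfl⟩, ?_⟩
    rintro h' ⟨_, h1, h2⟩
    funext d
    exact Subtype.ext (Prod.ext (h1 d) (h2 d))
  · refine ⟨ForestCatAux.wfs, fun h => Iff.rfl, fun h => Iff.rfl, ?_, ?_, ?_⟩
    · intro F G h hs
      refine ⟨fun {H} u v huv => Subtype.ext (funext fun y => ?_)⟩
      obtain ⟨x, rfl⟩ := hs y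
      exact congrFun (congrArg Subtype.val huv) x
    · intro F G h hi
      refine ⟨fun {H} u v huv => Subtype.ext (funext fun x => ?_)⟩
      exact hi (congrFun (congrArg Subtype.val huv) x)
    · intro X Z W e m he hm
      let P : ForestCat.{w} := ForestCat.mk {p : X.carrier × Z.carrier // e.1 p.1 = m.1 p.2}
        (ForestAux.isForest_pullback X.forest e.2 m.2 hm)
      let p₁ : P ⟶ X := ⟨fun p => p.1.1, ForestAux.isForestHom_fst e.2 m.2 hm⟩
      let p₂ : P ⟶ Z := ⟨fun p => p.1.2, ForestAux.isForestHom_snd e.2 m.2 hm⟩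
      have comm : p₁ ≫ e = p₂ ≫ m := Subtype.ext (funext fun p => p.2)
      refine ⟨P, p₁, p₂, IsPullback.of_isLimit (PullbackCone.IsLimit.mk comm
        (fun s => ?_) (fun s => ?_) (fun s => ?_) (fun s m' h₁ h₂ => ?_)),
        ForestAux.surjective_snd he⟩
      · have hcond : ∀ d, e.1 (s.fst.1 d) = m.1 (s.snd.1 d) :=
          fun d => congrFun (congrArg Subtype.val s.condition) d
        exact ⟨fun d => ⟨(s.fst.1 d, s.snd.1 d), hcond d⟩,
          ForestAux.isForestHom_pair hm s.fst.2 s.snd.2 hcond⟩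
      · exact Subtype.ext (funext fun d => rfl)
      · exact Subtype.ext (funext fun d => rfl)
      · refine Subtype.ext (funext fun d => Subtype.ext (Prod.ext ?_ ?_))
        · exact congrFun (congrArg Subtype.val h₁) d
        · exact congrFun (congrArg Subtype.val h₂) d
end ForestCatAux
end

section
/- Let C be a path category. For every object X of C, the poset Path(X) of path embeddings into X (ordered by factorisation) is a nonempty tree, whose root is the embedding part of the (quotient, embedding) factorisation of the unique morphism 0 → X. -/
open CategoryTheory CategoryTheory.Limits

universe v u

variable {C : Type u} [Category.{v} C]

/-- A path category: a category with a stable proper factorisation system having all small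
coproducts of paths, in which every path is connected, and satisfying the 2-out-of-3 condition
for quotients between paths. -/
structure PathCategory (C : Type u) [Category.{v} C] extends StableWFS C where
  pathCoproducts : ∀ {ι : Type v} (Ps : ι → C), (∀ i, IsPathOb M (Ps i)) →
    HasColimit (Discrete.functor Ps)
  connected : ∀ {ι : Type v} [Nonempty ι] (Ps : ι → C), (∀ i, IsPathOb M (Ps i)) →
    ∀ (c : ColimitCocone (Discrete.functor Ps)) {P : C}, IsPathOb M P →
      ∀ f : P ⟶ c.cocone.pt, ∃ (i : ι) (g : P ⟶ Ps i), g ≫ c.cocone.ι.app ⟨i⟩ = f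
  two_of_three : ∀ {P R S : C}, IsPathOb M P → IsPathOb M R → IsPathOb M S →
    ∀ (f : P ⟶ R) (g : R ⟶ S), Q (f ≫ g) → Q f

/-- Path embeddings into `X`: `M`-subobjects whose domain is a path. -/
abbrev PathSub (M : MorphismProperty C) (X : C) : Type (max u v) :=
  {a : MSub M X // IsPathOb M a.1}


/-- The right class of a `WFS` is closed under composition. -/
lemma WFS.M_comp (w : WFS C) {A B D : C} {f : A ⟶ B} {g : B ⟶ D}
    (hf : w.M f) (hg : w.M g) : w.M (f ≫ g) := by
  rw [w.M_iff]
  intro U V q hq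
  haveI := (w.M_iff f).mp hf q hq
  haveI := (w.M_iff g).mp hg q hq
  infer_instance

/-- Left cancellation in the right class, when the second morphism is a mono. -/
lemma WFS.M_cancel (w : WFS C) {A B D : C} {f : A ⟶ B} {g : B ⟶ D}
    (hfg : w.M (f ≫ g)) (hmono : Mono g) : w.M f := by
  rw [w.M_iff]
  intro U V q hq
  haveI := (w.M_iff (f ≫ g)).mp hfg q hq
  constructor
  intro u v sq
  have sq' : CommSq u q (f ≫ g) (v ≫ g) := ⟨by
    rw [← Category.assoc, sq.w, Category.assoc]⟩
  refine ⟨⟨CommSq.LiftStruct.mk sq'.lift sq'.fac_left ?_⟩⟩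
  have h2 := sq'.fac_right
  rw [← Category.assoc] at h2
  exact hmono.right_cancellation _ _ h2

/-- In a path category, for every object `X`, the poset `Path(X)` of path embeddings into `X`
is a nonempty tree: it has a root (least element), namely the embedding part of the
(quotient, embedding) factorisation of the unique morphism `0 ⟶ X`, and the down-set of every
element is a finite chain. -/
theorem stmt11 (pc : PathCategory C) {Z X W : C} (hZ : IsInitial Z)
    (e : Z ⟶ W) (m : W ⟶ X) (he : pc.Q e) (hm : pc.M m) (hfac : e ≫ m = hZ.to X) :
    ∃ hW : IsPathOb pc.M W,
      (∀ p : PathSub pc.M X, (⟨⟨W, m, hm⟩, hW⟩ : PathSub pc.M X) ≤ p) ∧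
      (∀ p a b : PathSub pc.M X, a ≤ p → b ≤ p → a ≤ b ∨ b ≤ a) ∧
      (∀ p : PathSub pc.M X,
        Finite (Antisymmetrization {a : PathSub pc.M X // a ≤ p} (· ≤ ·))) := by
  classical
  haveI hmmono : Mono m := pc.m_mono m hm
  -- `(W, m)` is the least `M`-subobject of `X`.
  have least : ∀ b : MSub pc.M X, (⟨W, m, hm⟩ : MSub pc.M X) ≤ b := by
    rintro ⟨S, s, hs⟩
    haveI := (pc.M_iff s).mp hs e he
    have sq : CommSq (hZ.to S) e s m := ⟨hZ.hom_ext _ _⟩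
    exact ⟨sq.lift, sq.fac_right⟩
  -- every `M`-subobject of `W` is split
  have split : ∀ (S : C) (s : S ⟶ W), pc.M s → ∃ l : W ⟶ S, l ≫ s = 𝟙 W := by
    intro S s hs
    obtain ⟨l, hl⟩ := least ⟨S, s ≫ m, pc.toWFS.M_comp hs hm⟩
    refine ⟨l, hmmono.right_cancellation _ _ ?_⟩
    simpa using hl
  have hWle : ∀ a b : MSub pc.M W, a ≤ b := by
    rintro ⟨S, s, hs⟩ ⟨T, t, ht⟩
    obtain ⟨l, hl⟩ := split T t ht
    exact ⟨s ≫ l, by rw [Category.assoc, hl, Category.comp_id]⟩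
  have hW : IsPathOb pc.M W := by
    refine ⟨fun a b => Or.inl (hWle a b), ?_⟩
    have : Subsingleton (Antisymmetrization (MSub pc.M W) (· ≤ ·)) := by
      constructor
      intro x y
      induction x using Quotient.inductionOn
      induction y using Quotient.inductionOn
      exact Quotient.sound ⟨hWle _ _, hWle _ _⟩
    exact Finite.of_subsingleton
  refine ⟨hW, fun p => least p.1, ?_, ?_⟩
  · -- down-sets are chains
    rintro ⟨⟨P, n, hn⟩, hP⟩ a b ⟨i, hi⟩ ⟨j, hj⟩
    haveI hn' : Mono n := pc.m_mono n hn
    have hiM : pc.M i := pc.toWFS.M_cancel (by rw [hi]; exact a.1.2.2) hn'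
    have hjM : pc.M j := pc.toWFS.M_cancel (by rw [hj]; exact b.1.2.2) hn'
    rcases hP.1 ⟨a.1.1, i, hiM⟩ ⟨b.1.1, j, hjM⟩ with ⟨k, hk⟩ | ⟨k, hk⟩
    · exact Or.inl ⟨k, by simp only at hk; rw [← hj, ← Category.assoc, hk, hi]⟩
    · exact Or.inr ⟨k, by simp only at hk; rw [← hi, ← Category.assoc, hk, hj]⟩
  · -- down-sets are finite
    rintro p
    obtain ⟨⟨P, n, hn⟩, hP⟩ := p
    haveI hn' : Mono n := pc.m_mono n hn
    haveI : Finite (Antisymmetrization (MSub pc.M P) (· ≤ ·)) := hP.2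
    set p : PathSub pc.M X := ⟨⟨P, n, hn⟩, hP⟩ with hp
    let g : {a : PathSub pc.M X // a ≤ p} → MSub pc.M P := fun a =>
      ⟨a.1.1.1, a.2.choose,
        pc.toWFS.M_cancel (by rw [a.2.choose_spec]; exact a.1.1.2.2) hn'⟩
    have gmono : ∀ (a : {a : PathSub pc.M X // a ≤ p}), (g a).2.1 ≫ n = a.1.1.2.1 :=
      fun a => a.2.choose_spec
    have gle : ∀ a b : {a : PathSub pc.M X // a ≤ p}, g a ≤ g b → a ≤ b := by
      rintro a b ⟨k, hk⟩
      refine ⟨k, ?_⟩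
      have h : (k ≫ (g b).2.1) ≫ n = (g a).2.1 ≫ n := by rw [hk]
      rw [Category.assoc, gmono, gmono] at h
      exact h
    refine Finite.of_injective
      (fun x : Antisymmetrization {a : PathSub pc.M X // a ≤ p} (· ≤ ·) =>
        (toAntisymmetrization (α := MSub pc.M P) (· ≤ ·) (g (ofAntisymmetrization _ x))))
      ?_
    intro x y hxy
    have h : AntisymmRel (· ≤ ·) (g (ofAntisymmetrization _ x)) (g (ofAntisymmetrization _ y)) :=
      Quotient.exact hxy
    have h' : AntisymmRel (α := {a : PathSub pc.M X // a ≤ p}) (· ≤ ·)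
        (ofAntisymmetrization _ x) (ofAntisymmetrization _ y) :=
      ⟨gle _ _ h.1, gle _ _ h.2⟩
    calc x = toAntisymmetrization _ (ofAntisymmetrization _ x) :=
            (toAntisymmetrization_ofAntisymmetrization _ x).symm
      _ = toAntisymmetrization _ (ofAntisymmetrization _ y) := Quotient.sound h'
      _ = y := toAntisymmetrization_ofAntisymmetrization _ y
end

section
/- Let C be a path category and f : X → Y a morphism. Then the induced map Path(f) : Path(X) → Path(Y) (sending a path embedding m to the embedding part of the factorisation of f ∘ m) is a tree morphism: for every m ∈ Path(X), Path(f) restricts to a bijection from the down-set of m to the down-set of Path(f)(m). -/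
/-! `∃_f a` is the least `M`-subobject through which `f ∘ a` factors, and every
(quotient, embedding) factorisation of `f ∘ a` represents it. For surjectivity, a path
`n ≤ ∃_f m` is `∃_f` of the pullback of `n` along the quotient part of `f ∘ m`, whose projection
onto `n` is a quotient by stability; taking `f` itself a quotient, the same argument shows that
quotients of paths are paths. For injectivity, the down-set of the path `m` is a chain, and if
`p ≤ q` have equivalent images, then the inclusion `k : p ⟶ q` followed by a map out of `q` is the
quotient part of `f ∘ p`. By 2-out-of-3, `k` is a quotient as well as an embedding, hence an
isomorphism. -/

open CategoryTheory CategoryTheory.Limits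

universe v u

variable {C : Type u} [Category.{v} C]

/-- The direct image `∃_f` of an `M`-subobject along a morphism `f`: the `M`-part of a chosen
(quotient, embedding) factorisation of `f ∘ m`. -/
noncomputable def imgSub (M Q : MorphismProperty C)
    (fact : ∀ {X Y : C} (f : X ⟶ Y), ∃ (Z : C) (e : X ⟶ Z) (m : Z ⟶ Y), Q e ∧ M m ∧ e ≫ m = f)
    {X Y : C} (f : X ⟶ Y) (a : MSub M X) : MSub M Y :=
  ⟨(fact (a.2.1 ≫ f)).choose, (fact (a.2.1 ≫ f)).choose_spec.choose_spec.choose,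
    (fact (a.2.1 ≫ f)).choose_spec.choose_spec.choose_spec.2.1⟩

/-- `IsPathOb M X` is by definition `IsFiniteChain (MSub M X)`. -/
def IsFiniteChain (α : Type*) [Preorder α] : Prop :=
  (∀ a b : α, a ≤ b ∨ b ≤ a) ∧ Finite (Antisymmetrization α (· ≤ ·))

namespace IsFiniteChain

variable {α β : Type*} [Preorder α] [Preorder β]

lemma of_le_iff {c : α → β} (hc : ∀ a b, c a ≤ c b ↔ a ≤ b) (h : IsFiniteChain β) :
    IsFiniteChain α := by
  obtain ⟨htotal, hfin⟩ := h
  refine ⟨fun a b => (htotal (c a) (c b)).imp (hc a b).1 (hc b a).1, ?_⟩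
  let g : α →o β := ⟨c, fun a b hab => (hc a b).2 hab⟩
  refine Finite.of_injective g.antisymmetrization fun x y hxy => ?_
  induction x using Antisymmetrization.ind
  induction y using Antisymmetrization.ind
  simp only [OrderHom.antisymmetrization_apply_mk] at hxy
  exact le_antisymm
    (toAntisymmetrization_le_toAntisymmetrization_iff.2
      ((hc _ _).1 (toAntisymmetrization_le_toAntisymmetrization_iff.1 hxy.le)))
    (toAntisymmetrization_le_toAntisymmetrization_iff.2
      ((hc _ _).1 (toAntisymmetrization_le_toAntisymmetrization_iff.1 hxy.ge)))

lemma of_monotone_of_forall_antisymmRel {g : α → β} (hg : Monotone g)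
    (hsurj : ∀ b, ∃ a, AntisymmRel (· ≤ ·) (g a) b) (h : IsFiniteChain α) :
    IsFiniteChain β := by
  obtain ⟨htotal, hfin⟩ := h
  refine ⟨fun b₁ b₂ => ?_, ?_⟩
  · obtain ⟨a₁, h₁⟩ := hsurj b₁
    obtain ⟨a₂, h₂⟩ := hsurj b₂
    exact (htotal a₁ a₂).imp (fun h => (h₁.le_congr h₂).1 (hg h))
      (fun h => (h₂.le_congr h₁).1 (hg h))
  · refine Finite.of_surjective (OrderHom.antisymmetrization ⟨g, hg⟩) fun y => ?_
    induction y using Antisymmetrization.ind with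
    | _ b =>
      obtain ⟨a, hab⟩ := hsurj b
      exact ⟨toAntisymmetrization _ a, Quotient.sound hab⟩

end IsFiniteChain

namespace WFS

variable (W : WFS C)

noncomputable abbrev img {X Y : C} (f : X ⟶ Y) (a : MSub W.M X) : MSub W.M Y :=
  imgSub W.M W.Q W.fact f a

lemma M_eq_rlp : W.M = W.Q.rlp :=
  MorphismProperty.ext _ _ fun _ _ => W.M_iff

instance : W.M.IsMultiplicative := by
  rw [M_eq_rlp]
  infer_instance

instance : W.M.IsStableUnderBaseChange := by
  rw [M_eq_rlp]
  infer_instance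

lemma exists_lift {A B A' B' : C} {e : A ⟶ B} {m : A' ⟶ B'} (he : W.Q e) (hm : W.M m)
    (u : A ⟶ A') (v : B ⟶ B') (w : u ≫ m = e ≫ v) :
    ∃ l : B ⟶ A', e ≫ l = u ∧ l ≫ m = v := by
  have sq : CommSq u e m v := ⟨w⟩
  have := ((W.Q_iff e).1 he m hm).sq_hasLift sq
  exact ⟨sq.lift, sq.fac_left, sq.fac_right⟩

lemma isIso_of_Q_of_M {A B : C} {k : A ⟶ B} (hQ : W.Q k) (hM : W.M k) : IsIso k := by
  obtain ⟨l, hkl, hlk⟩ := W.exists_lift hQ hM (𝟙 A) (𝟙 B) (by simp)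
  exact ⟨l, hkl, hlk⟩

lemma img_spec {X Y : C} (f : X ⟶ Y) (a : MSub W.M X) :
    ∃ e : a.1 ⟶ (W.img f a).1, W.Q e ∧ e ≫ (W.img f a).2.1 = a.2.1 ≫ f :=
  ⟨(W.fact (a.2.1 ≫ f)).choose_spec.choose,
    (W.fact (a.2.1 ≫ f)).choose_spec.choose_spec.choose_spec.1,
    (W.fact (a.2.1 ≫ f)).choose_spec.choose_spec.choose_spec.2.2⟩

lemma img_le_iff {X Y : C} (f : X ⟶ Y) (a : MSub W.M X) (n : MSub W.M Y) :
    W.img f a ≤ n ↔ ∃ k : a.1 ⟶ n.1, k ≫ n.2.1 = a.2.1 ≫ f := by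
  obtain ⟨e, he, hfac⟩ := W.img_spec f a
  constructor
  · rintro ⟨i, hi⟩
    exact ⟨e ≫ i, by rw [Category.assoc, hi, hfac]⟩
  · rintro ⟨k, hk⟩
    obtain ⟨l, -, hl⟩ := W.exists_lift he n.2.2 k (W.img f a).2.1 (by rw [hk, hfac])
    exact ⟨l, hl⟩

lemma antisymmRel_img_of_fac {X Y : C} (f : X ⟶ Y) (a : MSub W.M X) (n : MSub W.M Y)
    (e : a.1 ⟶ n.1) (he : W.Q e) (hfac : e ≫ n.2.1 = a.2.1 ≫ f) :
    AntisymmRel (· ≤ ·) (W.img f a) n := by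
  obtain ⟨e', -, hfac'⟩ := W.img_spec f a
  refine ⟨(W.img_le_iff f a n).2 ⟨e, hfac⟩, ?_⟩
  obtain ⟨l, -, hl⟩ := W.exists_lift he (W.img f a).2.2 e' n.2.1 (by rw [hfac', hfac])
  exact ⟨l, hl⟩

lemma img_mono {X Y : C} (f : X ⟶ Y) : Monotone (W.img f) := by
  rintro a b ⟨i, hi⟩
  obtain ⟨e, -, hfac⟩ := W.img_spec f b
  exact (W.img_le_iff f a _).2 ⟨i ≫ e, by rw [Category.assoc, hfac, ← Category.assoc, hi]⟩

end WFS

namespace ProperWFS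

variable (W : ProperWFS C)

lemma M_of_comp {A B Z : C} (g : A ⟶ B) (h : B ⟶ Z) (hgh : W.M (g ≫ h)) (hh : W.M h) :
    W.M g := by
  have := W.m_mono h hh
  refine (W.M_iff g).2 fun E F q hq => ⟨fun {u v} sq => ?_⟩
  obtain ⟨l, hl₁, hl₂⟩ := W.exists_lift hq hgh u (v ≫ h) (by rw [← Category.assoc, sq.w,
    Category.assoc])
  exact ⟨⟨⟨l, hl₁, by rw [← cancel_mono h, Category.assoc, hl₂]⟩⟩⟩

lemma exists_M_of_le {X : C} {p m : MSub W.M X} (h : p ≤ m) :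
    ∃ i : p.1 ⟶ m.1, W.M i ∧ i ≫ m.2.1 = p.2.1 := by
  obtain ⟨i, hi⟩ := h
  exact ⟨i, W.M_of_comp i m.2.1 (hi ▸ p.2.2) m.2.2, hi⟩

lemma isPathOb_of_M {S X : C} {m : S ⟶ X} (hm : W.M m) (hX : IsPathOb W.M X) :
    IsPathOb W.M S := by
  have := W.m_mono m hm
  let c (a : MSub W.M S) : MSub W.M X := ⟨a.1, a.2.1 ≫ m, W.M.comp_mem _ _ a.2.2 hm⟩
  refine IsFiniteChain.of_le_iff (c := c) (fun a b => ⟨?_, ?_⟩) hX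
  · rintro ⟨i, hi⟩
    exact ⟨i, (cancel_mono m).1 (by simpa only [c, Category.assoc] using hi)⟩
  · rintro ⟨i, hi⟩
    exact ⟨i, by simp only [c, ← hi, Category.assoc]⟩

lemma le_total_of_le {X : C} {p₁ p₂ m : MSub W.M X} (hm : IsPathOb W.M m.1) (h₁ : p₁ ≤ m)
    (h₂ : p₂ ≤ m) : p₁ ≤ p₂ ∨ p₂ ≤ p₁ := by
  obtain ⟨i₁, hi₁, hfac₁⟩ := W.exists_M_of_le h₁
  obtain ⟨i₂, hi₂, hfac₂⟩ := W.exists_M_of_le h₂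
  refine (hm.1 ⟨_, i₁, hi₁⟩ ⟨_, i₂, hi₂⟩).imp (fun ⟨k, hk⟩ => ⟨k, ?_⟩) (fun ⟨k, hk⟩ => ⟨k, ?_⟩)
  · rw [← hfac₁, ← hfac₂, ← Category.assoc, hk]
  · rw [← hfac₁, ← hfac₂, ← Category.assoc, hk]

end ProperWFS

namespace StableWFS

variable (W : StableWFS C)

lemma exists_antisymmRel_img_of_le {X Y : C} (f : X ⟶ Y) (m : MSub W.M X) {n : MSub W.M Y}
    (h : n ≤ W.img f m) :
    ∃ (S : C) (i : S ⟶ m.1) (hi : W.M i),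
      AntisymmRel (· ≤ ·) (W.img f ⟨S, i ≫ m.2.1, W.M.comp_mem _ _ hi m.2.2⟩) n := by
  obtain ⟨j, hj⟩ := h
  have hj' : W.M j := W.M_of_comp j _ (hj ▸ n.2.2) (W.img f m).2.2
  obtain ⟨e, he, hfac⟩ := W.img_spec f m
  obtain ⟨P, p₁, p₂, hpb, hp₂⟩ := W.stable e j he hj'
  have hp₁ : W.M p₁ := MorphismProperty.IsStableUnderBaseChange.of_isPullback hpb.flip hj'
  refine ⟨P, p₁, hp₁, W.antisymmRel_img_of_fac f _ n p₂ hp₂ ?_⟩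
  rw [← hj, ← Category.assoc, ← hpb.w, Category.assoc, hfac, Category.assoc]

lemma isPathOb_of_Q {P I : C} {e : P ⟶ I} (he : W.Q e) (hP : IsPathOb W.M P) :
    IsPathOb W.M I := by
  refine IsFiniteChain.of_monotone_of_forall_antisymmRel (W.img_mono e) (fun n => ?_) hP
  let top : MSub W.M P := ⟨P, 𝟙 P, W.M.id_mem P⟩
  have hn : n ≤ W.img e top :=
    le_trans ⟨n.2.1, Category.comp_id _⟩
      (W.antisymmRel_img_of_fac e top ⟨I, 𝟙 I, W.M.id_mem I⟩ e he (by simp [top])).ge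
  obtain ⟨_, _, _, hS⟩ := W.exists_antisymmRel_img_of_le e top hn
  exact ⟨_, hS⟩

end StableWFS

namespace PathCategory

variable (W : PathCategory C)

lemma le_of_le_of_img_le {X Y : C} (f : X ⟶ Y) {p q : MSub W.M X} (hp : IsPathOb W.M p.1)
    (hq : IsPathOb W.M q.1) (hpq : p ≤ q) (h : W.img f q ≤ W.img f p) : q ≤ p := by
  obtain ⟨k, hk⟩ := hpq
  obtain ⟨v, hv⟩ := h
  obtain ⟨ep, hep, hfacp⟩ := W.img_spec f p
  obtain ⟨eq, -, hfacq⟩ := W.img_spec f q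
  have := W.m_mono _ (W.img f p).2.2
  have hkev : k ≫ eq ≫ v = ep := by
    rw [← cancel_mono (W.img f p).2.1, Category.assoc, Category.assoc, hv, hfacq, hfacp,
      ← Category.assoc, hk]
  have hQk : W.Q k :=
    W.two_of_three hp hq (W.isPathOb_of_Q hep hp) k (eq ≫ v) (hkev ▸ hep)
  have hMk : W.M k := W.M_of_comp k q.2.1 (hk ▸ p.2.2) q.2.2
  have := W.isIso_of_Q_of_M hQk hMk
  exact ⟨inv k, by rw [← hk, IsIso.inv_hom_id_assoc]⟩

end PathCategory

/-- In a path category, for any morphism `f : X ⟶ Y`, the induced map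
`Path(f) : Path(X) → Path(Y)` is a tree morphism: it sends path embeddings to path embeddings,
is monotone, and restricts to a bijection (surjective and injective up to equivalence of
subobjects) from the down-set of `m` onto the down-set of `Path(f)(m)`. -/
theorem stmt12 (pc : PathCategory C) {X Y : C} (f : X ⟶ Y)
    (m : MSub pc.M X) (hm : IsPathOb pc.M m.1) :
    IsPathOb pc.M (imgSub pc.M pc.Q pc.fact f m).1 ∧
    (∀ p : MSub pc.M X, IsPathOb pc.M p.1 → p ≤ m →
      imgSub pc.M pc.Q pc.fact f p ≤ imgSub pc.M pc.Q pc.fact f m) ∧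
    (∀ n : MSub pc.M Y, IsPathOb pc.M n.1 → n ≤ imgSub pc.M pc.Q pc.fact f m →
      ∃ p : MSub pc.M X, IsPathOb pc.M p.1 ∧ p ≤ m ∧
        imgSub pc.M pc.Q pc.fact f p ≤ n ∧ n ≤ imgSub pc.M pc.Q pc.fact f p) ∧
    (∀ p₁ p₂ : MSub pc.M X, IsPathOb pc.M p₁.1 → IsPathOb pc.M p₂.1 → p₁ ≤ m → p₂ ≤ m →
      imgSub pc.M pc.Q pc.fact f p₁ ≤ imgSub pc.M pc.Q pc.fact f p₂ →
      imgSub pc.M pc.Q pc.fact f p₂ ≤ imgSub pc.M pc.Q pc.fact f p₁ →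
      p₁ ≤ p₂ ∧ p₂ ≤ p₁) := by
  obtain ⟨e, he, -⟩ := pc.img_spec f m
  refine ⟨pc.isPathOb_of_Q he hm, fun p _ hpm => pc.img_mono f hpm, fun n _ hnm => ?_,
    fun p₁ p₂ hp₁ hp₂ hpm₁ hpm₂ h₁₂ h₂₁ => ?_⟩
  · obtain ⟨_, i, hi, hS⟩ := pc.exists_antisymmRel_img_of_le f m hnm
    exact ⟨_, pc.isPathOb_of_M hi hm, ⟨i, rfl⟩, hS⟩
  · rcases pc.le_total_of_le hm hpm₁ hpm₂ with h | h
    · exact ⟨h, pc.le_of_le_of_img_le f hp₁ hp₂ h h₂₁⟩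
    · exact ⟨pc.le_of_le_of_img_le f hp₂ hp₁ h h₁₂, h⟩
end

section
/- Let C be a path category, X an object of C, m a path embedding into X, and S a nonempty subset of M-Sub(X). If m is the supremum of S in M-Sub(X), then m ∈ S. -/
open CategoryTheory CategoryTheory.Limits

universe v u

variable {C : Type u} [Category.{v} C]

/-! Every `s ∈ S` lies below `m`, and since `M` is left cancellable the factorisation of `s`
through `m` is itself an embedding, i.e. an `M`-subobject of the path `m`. These form a nonempty
subset of the finite chain `M-Sub(m)`, so one of them, `s₀`, is largest; as factorisations through
`m` reflect the order, `s₀` is an upper bound of `S`, and `m ≤ s₀` because `m` is the least one. -/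

lemma exists_forall_le_of_finite_antisymmetrization {ι β : Type*} [Nonempty ι] [Preorder β]
    [Finite (Antisymmetrization β (· ≤ ·))] (htot : ∀ a b : β, a ≤ b ∨ b ≤ a) (f : ι → β) :
    ∃ i, ∀ j, f j ≤ f i := by
  obtain ⟨i, -, hi⟩ := Set.Finite.exists_maximalFor' (toAntisymmetrization (· ≤ ·) ∘ f)
    Set.univ (Set.toFinite _) Set.univ_nonempty
  refine ⟨i, fun j => (htot (f j) (f i)).elim id fun hij => ?_⟩
  simpa only [Function.comp_apply, toAntisymmetrization_le_toAntisymmetrization_iff] using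
    hi (Set.mem_univ j) (by simpa only [Function.comp_apply,
      toAntisymmetrization_le_toAntisymmetrization_iff] using hij)

lemma ProperWFS.M_of_comp_s14 (W : ProperWFS C) {A B X : C} (i : A ⟶ B) (g : B ⟶ X)
    (hg : W.M g) (hig : W.M (i ≫ g)) : W.M i := by
  rw [W.M_iff]
  intro P P' f hf
  have hlift : HasLiftingProperty f (i ≫ g) := (W.M_iff (i ≫ g)).1 hig f hf
  have hmono : Mono g := W.m_mono g hg
  refine ⟨fun {u v} sq => ?_⟩
  have sq' : CommSq u f (i ≫ g) (v ≫ g) := ⟨by rw [reassoc_of% sq.w]⟩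
  -- lift against `i ≫ g`; the lower triangle for `i` follows because `g` is mono
  exact ⟨⟨⟨sq'.lift, sq'.fac_left, (cancel_mono g).1 (by rw [Category.assoc, sq'.fac_right])⟩⟩⟩

namespace MSub

variable {W : ProperWFS C} {X : C}

noncomputable def restrict (m s : MSub W.M X) (h : s ≤ m) : MSub W.M m.1 :=
  ⟨s.1, h.choose, W.M_of_comp_s14 h.choose m.2.1 m.2.2 (by rw [h.choose_spec]; exact s.2.2)⟩

lemma le_of_restrict_le {m s t : MSub W.M X} (hs : s ≤ m) (ht : t ≤ m)
    (h : restrict m s hs ≤ restrict m t ht) : s ≤ t := by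
  obtain ⟨j, hj : j ≫ ht.choose = hs.choose⟩ := h
  refine ⟨j, ?_⟩
  rw [← ht.choose_spec, ← hs.choose_spec, ← hj]
  exact (Category.assoc _ _ _).symm

end MSub

/-- In a path category, if a path embedding `m` into `X` is the supremum in `M-Sub(X)` of a
nonempty set `S` of `M`-subobjects, then `m` belongs to `S` (up to equivalence of subobjects). -/
theorem stmt14 (pc : PathCategory C) {X : C} (m : MSub pc.M X) (hm : IsPathOb pc.M m.1)
    (S : Set (MSub pc.M X)) (hS : S.Nonempty)
    (hub : ∀ s ∈ S, s ≤ m) (hlub : ∀ b : MSub pc.M X, (∀ s ∈ S, s ≤ b) → m ≤ b) :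
    ∃ s ∈ S, s ≤ m ∧ m ≤ s := by
  have : Nonempty S := hS.to_subtype
  have := hm.2
  obtain ⟨⟨s₀, hs₀⟩, hmax⟩ := exists_forall_le_of_finite_antisymmetrization hm.1
    fun s : S => MSub.restrict (W := pc.toProperWFS) m s (hub s s.2)
  exact ⟨s₀, hs₀, hub s₀ hs₀, hlub s₀ fun s hs => MSub.le_of_restrict_le _ _ (hmax ⟨s, hs⟩)⟩
end

section
/- Let f : X → Y be a pathwise embedding in a category with a stable proper factorisation system. Then f is open if and only if Path(f) : Path(X) → Path(Y) is a p-morphism, i.e., Path(f)(↑m) = ↑Path(f)(m) for every m ∈ Path(X). -/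
open CategoryTheory CategoryTheory.Limits

universe v u

variable {C : Type u} [Category.{v} C]

/-- A pathwise embedding: a morphism `f : X ⟶ Y` such that `f ∘ m` is an embedding for every
path embedding `m` into `X`. -/
def PathwiseEmbedding (w : StableWFS C) {X Y : C} (f : X ⟶ Y) : Prop :=
  ∀ {P : C} (m : P ⟶ X), w.M m → IsPathOb w.M P → w.M (m ≫ f)

/-- An open map: every commutative square whose top is a path embedding `P ↪ Q`, whose left is a
path embedding into `X`, whose right is a path embedding into `Y`, and whose bottom is `f`,
admits a diagonal filler. -/
def OpenMap (w : StableWFS C) {X Y : C} (f : X ⟶ Y) : Prop :=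
  ∀ {P Q : C} (k : P ⟶ Q) (m : P ⟶ X) (n : Q ⟶ Y),
    w.M k → w.M m → w.M n → IsPathOb w.M P → IsPathOb w.M Q →
    k ≫ n = m ≫ f → ∃ d : Q ⟶ X, k ≫ d = m ∧ d ≫ f = n

/-- A pathwise embedding `f` is open if and only if `Path(f)` (which sends a path embedding `m`
to `f ∘ m`) is a p-morphism: the image of the up-set of `m` is the up-set of `Path(f)(m)`; the
nontrivial inclusion says any path embedding `n` into `Y` lying above `f ∘ m` equals (as a
subobject) `f ∘ m'` for some path embedding `m'` into `X` above `m`. -/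
theorem stmt15 (w : StableWFS C) {X Y : C} (f : X ⟶ Y) (hf : PathwiseEmbedding w f) :
    OpenMap w f ↔
      ∀ {P Q : C} (m : P ⟶ X) (n : Q ⟶ Y), w.M m → IsPathOb w.M P → w.M n → IsPathOb w.M Q →
        (∃ i : P ⟶ Q, i ≫ n = m ≫ f) →
        ∃ (P' : C) (m' : P' ⟶ X), w.M m' ∧ IsPathOb w.M P' ∧
          (∃ j : P ⟶ P', j ≫ m' = m) ∧ (∃ φ : P' ≅ Q, φ.hom ≫ n = m' ≫ f) := by
  constructor
  · intro ho P Q m n hm hP hn hQ ⟨i, hi⟩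
    haveI : Mono n := w.m_mono n hn
    -- First, `i` is an `M`-morphism
    have hiM : w.M i := by
      rw [w.M_iff]
      intro A B e he
      constructor
      intro u v sq
      have hmf : w.M (m ≫ f) := hf m hm hP
      haveI := (w.M_iff (m ≫ f)).mp hmf e he
      have sq2 : CommSq u e (m ≫ f) (v ≫ n) :=
        ⟨by rw [← hi, ← Category.assoc, sq.w, Category.assoc]⟩
      refine ⟨⟨⟨sq2.lift, sq2.fac_left, ?_⟩⟩⟩
      have hl2 := sq2.fac_right
      set l := sq2.lift
      have : (l ≫ i) ≫ n = v ≫ n := by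
        rw [Category.assoc, hi, ← Category.assoc] at *
        exact hl2
      exact (cancel_mono n).mp this
    obtain ⟨d, hd1, hd2⟩ := ho i m n hiM hm hn hP hQ hi
    -- `d` is an `M`-morphism
    have hdM : w.M d := by
      rw [w.M_iff]
      intro A B e he
      constructor
      intro u v sq
      haveI := (w.M_iff n).mp hn e he
      have sq2 : CommSq u e n (v ≫ f) :=
        ⟨by rw [← hd2, ← Category.assoc, sq.w, Category.assoc]⟩
      refine ⟨⟨⟨sq2.lift, sq2.fac_left, ?_⟩⟩⟩
      have hl2 := sq2.fac_right
      set l := sq2.lift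
      haveI : Epi e := w.q_epi e he
      have : e ≫ (l ≫ d) = e ≫ v := by
        rw [← Category.assoc, sq2.fac_left, sq.w]
      exact (cancel_epi e).mp this
    exact ⟨Q, d, hdM, hQ, ⟨i, hd1⟩, ⟨Iso.refl Q, by simp [hd2]⟩⟩
  · intro hp P Q k m n hk hm hn hP hQ hsq
    obtain ⟨P', m', hm', hP', ⟨j, hj⟩, ⟨φ, hφ⟩⟩ :=
      hp m n hm hP hn hQ ⟨k, hsq⟩
    haveI : Mono n := w.m_mono n hn
    refine ⟨φ.inv ≫ m', ?_, by rw [Category.assoc, ← hφ, Iso.inv_hom_id_assoc]⟩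
    haveI : Mono m' := w.m_mono m' hm'
    have hk' : k = j ≫ φ.hom := by
      have : k ≫ n = (j ≫ φ.hom) ≫ n := by
        rw [hsq, Category.assoc, hφ, ← Category.assoc, hj]
      exact (cancel_mono n).mp this
    rw [hk', Category.assoc, Iso.hom_inv_id_assoc, hj]
end

section
/- Let C be an arboreal category and f : X ↠ Y a quotient. Then the tree morphism Path(f) : Path(X) → Path(Y) is surjective. -/
open CategoryTheory CategoryTheory.Limits

universe v u

variable {C : Type u} [Category.{v} C]

/-- The indexing category of path embeddings into `X`: the full subcategory of `Over X`
on embeddings with path domain. -/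
abbrev PathOver (M : MorphismProperty C) (X : C) :=
  ObjectProperty.FullSubcategory (fun f : Over X => M f.hom ∧ IsPathOb M f.left)

/-- The canonical diagram of path embeddings into `X`. -/
def pathDiagram (M : MorphismProperty C) (X : C) : PathOver M X ⥤ C :=
  ObjectProperty.ι _ ⋙ Over.forget X

/-- The canonical cocone with vertex `X` over the diagram of path embeddings into `X`. -/
def pathCocone (M : MorphismProperty C) (X : C) : Cocone (pathDiagram M X) where
  pt := X
  ι :=
    { app := fun f => f.obj.hom
      naturality := fun f g k => by
        simp [pathDiagram] }

/-- An arboreal category: a path category in which every object is path-generated, i.e. the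
canonical cocone of path embeddings into `X` is a colimit cocone, for every `X`. -/
structure ArborealCategory (C : Type u) [Category.{v} C] extends PathCategory C where
  pathGenerated : ∀ X : C, Nonempty (IsColimit (pathCocone M X))

/-!
Pull the quotient `f` back along `n` to a quotient `p₂ : Z ↠ Qn` with `Z` embedded in `X`. The
object `Z` is the colimit of its path embeddings, and the images of these under `p₂` are
embeddings into the path `Qn`, whose embeddings form a finite chain; so one image `m` is largest.
Then `p₂` factors through `m`, and lifting the quotient `p₂` against the embedding `m` makes `m`
an isomorphism. The path embedding into `Z` giving that largest image, composed into `X`, is the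
one we want.
-/

lemma exists_forall_le_of_total_of_finite {α ι : Type*} [Preorder α] [Nonempty ι]
    (htot : ∀ a b : α, a ≤ b ∨ b ≤ a) [Finite (Antisymmetrization α (· ≤ ·))] (s : ι → α) :
    ∃ i, ∀ j, s j ≤ s i := by
  classical
  have : @Std.Total α (· ≤ ·) := ⟨htot⟩
  obtain ⟨_, ⟨i, rfl⟩, hi⟩ := (Set.range fun i => toAntisymmetrization (· ≤ ·) (s i))
    |>.exists_max_image id (Set.toFinite _) (Set.range_nonempty _)
  exact ⟨i, fun j => toAntisymmetrization_le_toAntisymmetrization_iff.mp (hi _ ⟨j, rfl⟩)⟩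

lemma IsPathOb.exists_forall_le {M : MorphismProperty C} {X : C} (hX : IsPathOb M X)
    {ι : Type*} [Nonempty ι] (s : ι → MSub M X) : ∃ i, ∀ j, s j ≤ s i :=
  have := hX.2
  exists_forall_le_of_total_of_finite hX.1 s

lemma isPathOb_of_isInitial (M : MorphismProperty C) {X : C} (hX : IsInitial X) :
    IsPathOb M X := by
  have hle (a b : MSub M X) : a ≤ b :=
    ⟨a.2.1 ≫ hX.to b.1, by simp [hX.hom_ext (hX.to b.1 ≫ b.2.1) (𝟙 X)]⟩
  refine ⟨fun a b => Or.inl (hle a b), ?_⟩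
  have : Subsingleton (Antisymmetrization (MSub M X) (· ≤ ·)) :=
    ⟨fun a b => Quotient.inductionOn₂' a b fun a b => Quotient.sound ⟨hle a b, hle b a⟩⟩
  infer_instance

lemma CategoryTheory.Limits.IsColimit.exists_lift_of_mono {J : Type*} [Category J] {F : J ⥤ C}
    {c : Cocone F} (hc : IsColimit c) {Y S : C} (g : c.pt ⟶ Y) (m : S ⟶ Y) [Mono m]
    (h : ∀ j, ∃ t : F.obj j ⟶ S, t ≫ m = c.ι.app j ≫ g) : ∃ t : c.pt ⟶ S, t ≫ m = g := by
  choose t ht using h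
  let s : Cocone F :=
    { pt := S
      ι :=
        { app := t
          naturality := fun j j' k => by
            rw [← cancel_mono m]
            simp [ht] } }
  exact ⟨hc.desc s, hc.hom_ext fun j => by simp [s, ht]⟩

namespace WFS

variable (w : WFS C)

lemma M_eq_rlp_s18 : w.M = w.Q.rlp := MorphismProperty.ext _ _ fun _ _ g => w.M_iff g

lemma Q_eq_llp : w.Q = w.M.llp := MorphismProperty.ext _ _ fun _ _ f => w.Q_iff f

lemma M_id (X : C) : w.M (𝟙 X) := by
  rw [M_eq_rlp_s18]
  exact MorphismProperty.id_mem _ X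

lemma M_comp_s18 {X Y Z : C} {g : X ⟶ Y} {h : Y ⟶ Z} (hg : w.M g) (hh : w.M h) : w.M (g ≫ h) := by
  rw [M_eq_rlp_s18] at *
  exact MorphismProperty.comp_mem _ g h hg hh

lemma Q_comp {X Y Z : C} {g : X ⟶ Y} {h : Y ⟶ Z} (hg : w.Q g) (hh : w.Q h) : w.Q (g ≫ h) := by
  rw [Q_eq_llp] at *
  exact MorphismProperty.comp_mem _ g h hg hh

lemma Q_of_isIso {X Y : C} (g : X ⟶ Y) [IsIso g] : w.Q g := by
  rw [Q_eq_llp]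
  exact MorphismProperty.llp_of_isIso _ g

lemma M_of_isPullback {X Y Y' S : C} {f : X ⟶ S} {g : Y ⟶ S} {f' : Y' ⟶ Y} {g' : Y' ⟶ X}
    (sq : IsPullback f' g' g f) (hg : w.M g) : w.M g' := by
  rw [M_eq_rlp_s18] at *
  exact MorphismProperty.of_isPullback sq hg

lemma nonempty_pathOver {X : C} (hX : IsColimit (pathCocone w.M X)) :
    Nonempty (PathOver w.M X) := by
  by_contra hempty
  rw [not_nonempty_iff] at hempty
  have hpath := isPathOb_of_isInitial w.M (isColimitEquivIsInitialOfIsEmpty (C := C) _ hX)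
  exact hempty.elim ⟨Over.mk (𝟙 X), w.M_id X, hpath⟩

end WFS

namespace ProperWFS

variable (w : ProperWFS C)

lemma isIso_of_fac {S Y Z : C} {m : S ⟶ Y} {q : Z ⟶ Y} {t : Z ⟶ S} (hfac : t ≫ m = q)
    (hm : w.M m) (hq : w.Q q) : IsIso m := by
  have := w.m_mono m hm
  have := (w.Q_iff q).mp hq m hm
  have sq : CommSq t q m (𝟙 Y) := ⟨by simp [hfac]⟩
  have : IsSplitEpi m := ⟨⟨⟨sq.lift, sq.fac_right⟩⟩⟩
  exact isIso_of_mono_of_isSplitEpi m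

lemma exists_pathOver_Q_comp {Z P : C} (hZ : IsColimit (pathCocone w.M Z)) {q : Z ⟶ P}
    (hq : w.Q q) (hP : IsPathOb w.M P) : ∃ i : PathOver w.M Z, w.Q (i.obj.hom ≫ q) := by
  have := w.nonempty_pathOver hZ
  choose S e m hQe hMm hfac using fun i : PathOver w.M Z => w.fact (i.obj.hom ≫ q)
  obtain ⟨imax, hmax⟩ := hP.exists_forall_le fun i => (⟨S i, m i, hMm i⟩ : MSub w.M P)
  have := w.m_mono _ (hMm imax)
  obtain ⟨t, ht⟩ := hZ.exists_lift_of_mono q (m imax) fun i => by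
    obtain ⟨j : S i ⟶ S imax, hj : j ≫ m imax = m i⟩ := hmax i
    exact ⟨e i ≫ j, (Category.assoc _ _ _).trans ((congrArg (e i ≫ ·) hj).trans (hfac i))⟩
  have := w.isIso_of_fac ht (hMm imax) hq
  exact ⟨imax, hfac imax ▸ w.Q_comp (hQe imax) (w.Q_of_isIso _)⟩

end ProperWFS

/-- In an arboreal category, if `f : X ↠ Y` is a quotient then `Path(f) : Path(X) → Path(Y)` is
surjective: every path embedding `n` into `Y` is the image (the `M`-part of the
(quotient, embedding) factorisation of `f ∘ m`) of some path embedding `m` into `X`. -/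
theorem stmt18 (ac : ArborealCategory C) {X Y : C} (f : X ⟶ Y) (hf : ac.Q f)
    {Qn : C} (n : Qn ⟶ Y) (hn : ac.M n) (hQn : IsPathOb ac.M Qn) :
    ∃ (P : C) (m : P ⟶ X) (e : P ⟶ Qn),
      ac.M m ∧ IsPathOb ac.M P ∧ ac.Q e ∧ e ≫ n = m ≫ f := by
  obtain ⟨Z, p₁, p₂, hpb, hp₂⟩ := ac.stable f n hf hn
  obtain ⟨i, hi⟩ := ac.exists_pathOver_Q_comp (ac.pathGenerated Z).some hp₂ hQn
  exact ⟨i.obj.left, i.obj.hom ≫ p₁, i.obj.hom ≫ p₂,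
    ac.M_comp_s18 i.property.1 (ac.M_of_isPullback hpb.flip hn), i.property.2, hi, by simp [hpb.w]⟩
end
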